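/- Let bx₁ (state S₁, between A₁ and B₁) and bx₂ (state S₂, between A₂ and B₂) be transparent well-behaved bx over the same lawful monad m. Define the pair bx on state S₁ × S₂ between A₁ × A₂ and B₁ × B₂ by getL := gets (fun (s₁, s₂) => (readL₁ s₁, readL₂ s₂)); setL (a₁, a₂) := fun (s₁, s₂) => do let (_, s₁') ← setL₁ a₁ s₁; let (_, s₂') ← setL₂ a₂ s₂; pure (⟨⟩, (s₁', s₂')); and dually getR := gets (fun (s₁, s₂) => (readR₁ s₁, readR₂ s₂)) and setR (b₁, b₂) := fun (s₁, s₂) => do let (_, s₁') ← setR₁ b₁ s₁; let (_, s₂') ← setR₂ b₂ s₂; pure (⟨⟩, (s₁', s₂')). Then the pair bx is transparent well-behaved: it satisfies (S_LG_L) (do setL p; getL) = (do setL p; pure p) for all p : A₁ × A₂; (G_LS_L) (do let p ← getL; setL p) = pure ⟨⟩; (S_RG_R) (do setR q; getR) = (do setR q; pure q) for all q : B₁ × B₂; and (G_RS_R) (do let q ← getR; setR q) = pure ⟨⟩. -/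

import Mathlib

universe u v

def getsS {m : Type u → Type v} [Monad m] {σ α : Type u} (f : σ → α) : StateT σ m α := do
  let s ← get
  pure (f s)

/-- A transparent bidirectional transformation over the monad `m`,
with state space `S`, between `A` and `B`. -/
structure TBX (m : Type u → Type v) (S A B : Type u) where
  readL : S → A
  readR : S → B
  setL : A → StateT S m PUnit
  setR : B → StateT S m PUnit

/-- Well-behavedness of a transparent bx: the laws (S_LG_L), (G_LS_L), (S_RG_R), (G_RS_R).
(The get–get laws hold automatically since the gets are `T`-pure queries.) -/
structure TBX.WellBehaved {m : Type u → Type v} [Monad m] {S A B : Type u}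
    (bx : TBX m S A B) : Prop where
  slgl : ∀ a : A, (do bx.setL a; getsS (m := m) bx.readL) = (do bx.setL a; pure a)
  glsl : (do let a ← getsS (m := m) bx.readL; bx.setL a) = (pure PUnit.unit : StateT S m PUnit)
  srgr : ∀ b : B, (do bx.setR b; getsS (m := m) bx.readR) = (do bx.setR b; pure b)
  grsr : (do let b ← getsS (m := m) bx.readR; bx.setR b) = (pure PUnit.unit : StateT S m PUnit)

/-- The pair of two transparent bx. -/
def TBX.pair {m : Type u → Type v} [Monad m] {S₁ S₂ A₁ B₁ A₂ B₂ : Type u}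
    (bx₁ : TBX m S₁ A₁ B₁) (bx₂ : TBX m S₂ A₂ B₂) :
    TBX m (S₁ × S₂) (A₁ × A₂) (B₁ × B₂) where
  readL := fun s => (bx₁.readL s.1, bx₂.readL s.2)
  readR := fun s => (bx₁.readR s.1, bx₂.readR s.2)
  setL := fun a => fun s => do
    let (_, s₁') ← (bx₁.setL a.1).run s.1
    let (_, s₂') ← (bx₂.setL a.2).run s.2
    pure (PUnit.unit, (s₁', s₂'))
  setR := fun b => fun s => do
    let (_, s₁') ← (bx₁.setR b.1).run s.1
    let (_, s₂') ← (bx₂.setR b.2).run s.2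
    pure (PUnit.unit, (s₁', s₂'))

/-! The pair acts componentwise on the state, so each of its laws is the conjunction of the
component laws read pointwise in the state. Pointwise, (S_LG_L) says that every outcome of
`set a` is a state that reads back as `a`, so `read` may be replaced by `a` under any
continuation; (G_LS_L) says that `set (read s)` run from `s` is `pure (⟨⟩, s)`. -/

section Laws

variable {m : Type u → Type v} [Monad m] {S A : Type u}

def SetGet (set : A → StateT S m PUnit) (read : S → A) : Prop :=
  ∀ a : A, (do set a; getsS (m := m) read) = (do set a; pure a)

def GetSet (set : A → StateT S m PUnit) (read : S → A) : Prop :=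
  (do let a ← getsS (m := m) read; set a) = (pure PUnit.unit : StateT S m PUnit)

variable [LawfulMonad m]

@[simp]
theorem run_getsS (read : S → A) (s : S) :
    (getsS read : StateT S m A).run s = pure (read s, s) := by
  simp [getsS]

theorem SetGet.bind_read {set : A → StateT S m PUnit} {read : S → A} (h : SetGet set read)
    (a : A) (s : S) {β : Type u} (k : A → S → m β) :
    ((set a).run s >>= fun p => k (read p.2) p.2) = ((set a).run s >>= fun p => k a p.2) := by
  have h_run := congrArg (fun x => x.run s >>= fun q => k q.1 q.2) (h a)
  simpa using h_run

theorem GetSet.run_read {set : A → StateT S m PUnit} {read : S → A} (h : GetSet set read)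
    (s : S) : (set (read s)).run s = pure (PUnit.unit, s) := by
  simpa using congrArg (StateT.run · s) h

end Laws

def prodSet {m : Type u → Type v} [Monad m] {S₁ S₂ A₁ A₂ : Type u}
    (set₁ : A₁ → StateT S₁ m PUnit) (set₂ : A₂ → StateT S₂ m PUnit) :
    A₁ × A₂ → StateT (S₁ × S₂) m PUnit :=
  fun a s => do
    let p₁ ← (set₁ a.1).run s.1
    let p₂ ← (set₂ a.2).run s.2
    pure (PUnit.unit, (p₁.2, p₂.2))

section Prod

variable {m : Type u → Type v} [Monad m] {S₁ S₂ A₁ A₂ : Type u}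
  {set₁ : A₁ → StateT S₁ m PUnit} {read₁ : S₁ → A₁}
  {set₂ : A₂ → StateT S₂ m PUnit} {read₂ : S₂ → A₂}

theorem run_prodSet (a : A₁ × A₂) (s : S₁ × S₂) :
    (prodSet set₁ set₂ a).run s = ((set₁ a.1).run s.1 >>= fun p₁ => (set₂ a.2).run s.2 >>=
      fun p₂ => pure (PUnit.unit, (p₁.2, p₂.2))) := rfl

variable [LawfulMonad m]

theorem SetGet.prod (h₁ : SetGet set₁ read₁) (h₂ : SetGet set₂ read₂) :
    SetGet (prodSet set₁ set₂) (fun s => (read₁ s.1, read₂ s.2)) := by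
  rintro ⟨a₁, a₂⟩
  ext ⟨s₁, s₂⟩
  simp only [StateT.run_bind, run_prodSet, run_getsS, StateT.run_pure, bind_assoc, pure_bind]
  calc _ = ((set₁ a₁).run s₁ >>= fun p₁ => (set₂ a₂).run s₂ >>= fun p₂ =>
          pure ((read₁ p₁.2, a₂), (p₁.2, p₂.2))) :=
        bind_congr fun p₁ =>
          h₂.bind_read a₂ s₂ fun y s₂' => pure ((read₁ p₁.2, y), (p₁.2, s₂'))
    _ = _ := h₁.bind_read a₁ s₁ fun x s₁' => (set₂ a₂).run s₂ >>= fun p₂ =>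
          pure ((x, a₂), (s₁', p₂.2))

theorem GetSet.prod (h₁ : GetSet set₁ read₁) (h₂ : GetSet set₂ read₂) :
    GetSet (prodSet set₁ set₂) (fun s => (read₁ s.1, read₂ s.2)) := by
  ext ⟨s₁, s₂⟩
  simp [run_prodSet, h₁.run_read, h₂.run_read]

end Prod

theorem pair_wellBehaved
    {m : Type u → Type v} [Monad m] [LawfulMonad m] {S₁ S₂ A₁ B₁ A₂ B₂ : Type u}
    (bx₁ : TBX m S₁ A₁ B₁) (bx₂ : TBX m S₂ A₂ B₂)
    (h₁ : bx₁.WellBehaved) (h₂ : bx₂.WellBehaved) :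
    (bx₁.pair bx₂).WellBehaved :=
  ⟨SetGet.prod h₁.slgl h₂.slgl, GetSet.prod h₁.glsl h₂.glsl,
    SetGet.prod h₁.srgr h₂.srgr, GetSet.prod h₁.grsr h₂.grsr⟩
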